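/- Let n ≥ 1 and β > 0, and set k(y,z,t) = t^β ∂_t^β P_t(y−z) for y,z ∈ ℝⁿ and t > 0, where ∂_t^β acts in the variable t. Then there exists C > 0 such that the gradient in z satisfies |∇_z k(y,z,t)| ≤ C t^β / (t + |y−z|)^{n+β+1} for all y,z ∈ ℝⁿ and t > 0. -/

import Mathlib

open MeasureTheory Real Set

/-- For `β > 0`, the unique `m ∈ ℕ` with `m - 1 ≤ β < m`. -/
noncomputable def fracOrder (β : ℝ) : ℕ := ⌊β⌋.toNat + 1

/-- The `β`-th fractional derivative in `t` (à la Segovia–Wheeden):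
`∂_t^β F(t) = (e^{−iπ(m−β)}/Γ(m−β)) ∫₀^∞ ∂_t^m F(t+s) s^{m−β−1} ds` with `m - 1 ≤ β < m`. -/
noncomputable def fracDeriv (β : ℝ) (F : ℝ → ℂ) (t : ℝ) : ℂ :=
  (Complex.exp (-(Complex.I * (Real.pi : ℂ) * ((fracOrder β : ℂ) - (β : ℂ)))) /
      Complex.Gamma ((fracOrder β : ℂ) - (β : ℂ))) *
    ∫ s in Set.Ioi (0 : ℝ), iteratedDeriv (fracOrder β) F (t + s) *
      ((s ^ ((fracOrder β : ℝ) - β - 1) : ℝ) : ℂ)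

/-- The classical Poisson kernel `P_t(z) = c_n t/(|z|² + t²)^((n+1)/2)`,
`c_n = Γ((n+1)/2)/π^((n+1)/2)`. -/
noncomputable def classicalPoissonKernel (n : ℕ) (t : ℝ) (z : EuclideanSpace ℝ (Fin n)) : ℝ :=
  (Real.Gamma ((n + 1 : ℝ) / 2) / Real.pi ^ ((n + 1 : ℝ) / 2)) *
    (t / (‖z‖ ^ 2 + t ^ 2) ^ ((n + 1 : ℝ) / 2))

/-- The kernel `k(y,z,t) = t^β ∂_t^β P_t(y − z)`. -/
noncomputable def kker (n : ℕ) (β : ℝ) (y z : EuclideanSpace ℝ (Fin n)) (t : ℝ) : ℂ :=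
  ((t ^ β : ℝ) : ℂ) * fracDeriv β (fun τ => (classicalPoissonKernel n τ (y - z) : ℂ)) t

namespace S2

noncomputable def pp (n : ℕ) : ℝ := ((n : ℝ) + 1) / 2
noncomputable def cc (n : ℕ) : ℝ := Real.Gamma (pp n) / Real.pi ^ (pp n)

def U : Set (ℝ × ℝ) := {q | 0 < q.1 + q.2 ^ 2}

noncomputable def FkR (n : ℕ) (q : ℝ × ℝ) : ℝ := cc n * q.2 * (q.1 + q.2 ^ 2) ^ (-(pp n))

noncomputable def uu (n : ℕ) : ℕ → ℝ × ℝ → ℂ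
  | 0 => fun q => (FkR n q : ℂ)
  | (m + 1) => fun q => fderiv ℝ (uu n m) q (0, 1)

lemma hU : IsOpen U :=
  isOpen_lt continuous_const (continuous_fst.add (continuous_snd.pow 2))

lemma smooth_uu (n : ℕ) : ∀ m : ℕ, ContDiffOn ℝ (⊤ : ℕ∞) (uu n m) U := by
  intro m
  induction m with
  | zero =>
    show ContDiffOn ℝ (⊤ : ℕ∞) (fun q => ((FkR n q : ℝ) : ℂ)) U
    refine Complex.ofRealCLM.contDiff.comp_contDiffOn ?_
    refine (contDiffOn_const.mul contDiff_snd.contDiffOn).mul ?_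
    intro q hq
    exact (Real.contDiffAt_rpow_const_of_ne (ne_of_gt hq)).comp_contDiffWithinAt q
      ((contDiff_fst.add (contDiff_snd.pow 2)).contDiffWithinAt)
  | succ m ih =>
    show ContDiffOn ℝ (⊤ : ℕ∞) (fun q => fderiv ℝ (uu n m) q (0, 1)) U
    exact (ih.fderiv_of_isOpen hU (mod_cast le_top)).clm_apply contDiffOn_const

lemma diff_uu (n m : ℕ) {q : ℝ × ℝ} (hq : q ∈ U) : DifferentiableAt ℝ (uu n m) q :=
  (((smooth_uu n m).differentiableOn (by simp)).differentiableAt (hU.mem_nhds hq))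

lemma hasDerivAt_snd (n m : ℕ) {a b : ℝ} (hq : (a, b) ∈ U) :
    HasDerivAt (fun τ => uu n m (a, τ)) (uu n (m + 1) (a, b)) b := by
  have h := (diff_uu n m hq).hasFDerivAt
  have hline : HasDerivAt (fun τ : ℝ => ((a, τ) : ℝ × ℝ)) ((0 : ℝ), (1 : ℝ)) b :=
    (hasDerivAt_const _ _).prodMk (hasDerivAt_id _)
  exact h.comp_hasDerivAt b hline

lemma hasDerivAt_fst (n m : ℕ) {a b : ℝ} (hq : (a, b) ∈ U) :
    HasDerivAt (fun a' => uu n m (a', b)) (fderiv ℝ (uu n m) (a, b) (1, 0)) a := by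
  have h := (diff_uu n m hq).hasFDerivAt
  have hline : HasDerivAt (fun a' : ℝ => ((a', b) : ℝ × ℝ)) ((1 : ℝ), (0 : ℝ)) a :=
    (hasDerivAt_id _).prodMk (hasDerivAt_const _ _)
  exact h.comp_hasDerivAt a hline

lemma link (n m : ℕ) : ∀ a τ : ℝ, (a, τ) ∈ U →
    iteratedDeriv m (fun τ' => ((FkR n (a, τ') : ℝ) : ℂ)) τ = uu n m (a, τ) := by
  induction m with
  | zero => intro a τ _; simp [iteratedDeriv_zero, uu]
  | succ m ih =>
    intro a τ hτ
    rw [iteratedDeriv_succ]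
    have hopen : IsOpen {τ' : ℝ | (a, τ') ∈ U} := hU.preimage (Continuous.prodMk_right a)
    have hev : iteratedDeriv m (fun τ' => ((FkR n (a, τ') : ℝ) : ℂ)) =ᶠ[nhds τ]
        fun τ' => uu n m (a, τ') :=
      Filter.eventually_of_mem (hopen.mem_nhds hτ) (fun τ' h' => ih a τ' h')
    rw [hev.deriv_eq]
    exact (hasDerivAt_snd n m hτ).deriv

lemma FkR_hom (n : ℕ) {a b l : ℝ} (hq : (a, b) ∈ U) (hl : 0 < l) :
    FkR n (l ^ 2 * a, l * b) = l ^ (-((n : ℝ) + 0)) * FkR n (a, b) := by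
  have hab : (0:ℝ) < a + b ^ 2 := hq
  have h1 : l ^ 2 * a + (l * b) ^ 2 = l ^ 2 * (a + b ^ 2) := by ring
  unfold FkR
  rw [h1, Real.mul_rpow (sq_nonneg l) hab.le, ← Real.rpow_natCast l 2,
    ← Real.rpow_mul hl.le]
  have h2 : (2:ℕ) * (-(pp n)) = -((n:ℝ) + 0) + (-1) := by unfold pp; push_cast; ring
  rw [h2, Real.rpow_add hl, Real.rpow_neg_one]
  field_simp

lemma mem_U_scale {a b l : ℝ} (hq : (a, b) ∈ U) (hl : 0 < l) : (l ^ 2 * a, l * b) ∈ U := by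
  have hab : (0:ℝ) < a + b ^ 2 := hq
  show (0:ℝ) < l ^ 2 * a + (l * b) ^ 2
  have : l ^ 2 * a + (l * b) ^ 2 = l ^ 2 * (a + b ^ 2) := by ring
  rw [this]; exact mul_pos (pow_pos hl 2) hab

lemma hom_uu (n : ℕ) : ∀ m : ℕ, ∀ a b : ℝ, (a, b) ∈ U → ∀ l : ℝ, 0 < l →
    uu n m (l ^ 2 * a, l * b) = ((l ^ (-((n : ℝ) + (m : ℕ))) : ℝ) : ℂ) * uu n m (a, b) := by
  intro m
  induction m with
  | zero =>
    intro a b hq l hl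
    show ((FkR n (l^2*a, l*b) : ℝ) : ℂ) = _
    rw [FkR_hom n hq hl]
    show _ = _ * ((FkR n (a,b) : ℝ) : ℂ)
    push_cast
    ring
  | succ m ih =>
    intro a b hq l hl
    have hq' := mem_U_scale hq hl
    have H := hasDerivAt_snd n m hq'
    have hlb : HasDerivAt (fun τ : ℝ => l * τ) l b := by
      simpa using (hasDerivAt_id b).const_mul l
    have G := H.scomp b hlb
    have hopen : IsOpen {τ' : ℝ | (a, τ') ∈ U} := hU.preimage (Continuous.prodMk_right a)
    have hev : (fun τ => uu n m (l ^ 2 * a, l * τ)) =ᶠ[nhds b]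
        (fun τ => ((l ^ (-((n : ℝ) + (m : ℕ))) : ℝ) : ℂ) * uu n m (a, τ)) :=
      Filter.eventually_of_mem (hopen.mem_nhds hq) (fun τ' h' => ih a τ' h' l hl)
    have G' : HasDerivAt (fun τ => ((l ^ (-((n : ℝ) + (m : ℕ))) : ℝ) : ℂ) * uu n m (a, τ))
        (l • uu n (m + 1) (l ^ 2 * a, l * b)) b := by
      refine HasDerivAt.congr_of_eventuallyEq ?_ hev.symm
      exact G
    have K := (hasDerivAt_snd n m hq).const_mul ((l ^ (-((n : ℝ) + (m : ℕ))) : ℝ) : ℂ)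
    have huniq := G'.unique K
    have hc : ((l : ℂ)) ≠ 0 := by exact_mod_cast hl.ne'
    have huniq' : (l : ℂ) * uu n (m + 1) (l ^ 2 * a, l * b)
        = ((l ^ (-((n : ℝ) + (m : ℕ))) : ℝ) : ℂ) * uu n (m + 1) (a, b) := by
      rw [← huniq, Complex.real_smul]
    have hexp : (l ^ (-((n : ℝ) + ((m : ℕ) + 1))) : ℝ) = l⁻¹ * l ^ (-((n : ℝ) + (m : ℕ))) := by
      rw [show -((n : ℝ) + ((m : ℕ) + 1)) = (-1) + -((n : ℝ) + (m : ℕ)) by ring,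
        Real.rpow_add hl, Real.rpow_neg_one]
    calc uu n (m + 1) (l ^ 2 * a, l * b)
        = (l : ℂ)⁻¹ * ((l : ℂ) * uu n (m + 1) (l ^ 2 * a, l * b)) := by
            rw [← mul_assoc, inv_mul_cancel₀ hc, one_mul]
      _ = (l : ℂ)⁻¹ * (((l ^ (-((n : ℝ) + (m : ℕ))) : ℝ) : ℂ) * uu n (m + 1) (a, b)) := by
          rw [huniq']
      _ = ((l ^ (-((n : ℝ) + ((m : ℕ) + 1) )) : ℝ) : ℂ) * uu n (m + 1) (a, b) := by
          rw [hexp]; push_cast; ring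
      _ = _ := by push_cast; ring_nf

lemma hom_vv (n m : ℕ) {a b : ℝ} (hq : (a, b) ∈ U) {l : ℝ} (hl : 0 < l) :
    fderiv ℝ (uu n m) (l ^ 2 * a, l * b) (1, 0)
      = ((l ^ (-((n : ℝ) + (m : ℕ)) - 2) : ℝ) : ℂ) * fderiv ℝ (uu n m) (a, b) (1, 0) := by
  have hq' := mem_U_scale hq hl
  have H := hasDerivAt_fst n m hq'
  have hl2 : HasDerivAt (fun a' : ℝ => l ^ 2 * a') (l ^ 2) a := by
    simpa using (hasDerivAt_id a).const_mul (l ^ 2)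
  have G := H.scomp a hl2
  have hopen : IsOpen {a' : ℝ | (a', b) ∈ U} :=
    hU.preimage (continuous_id.prodMk continuous_const)
  have hev : (fun a' => uu n m (l ^ 2 * a', l * b)) =ᶠ[nhds a]
      (fun a' => ((l ^ (-((n : ℝ) + (m : ℕ))) : ℝ) : ℂ) * uu n m (a', b)) :=
    Filter.eventually_of_mem (hopen.mem_nhds hq) (fun a' h' => hom_uu n m a' b h' l hl)
  have G' : HasDerivAt (fun a' => ((l ^ (-((n : ℝ) + (m : ℕ))) : ℝ) : ℂ) * uu n m (a', b))
      ((l ^ 2) • fderiv ℝ (uu n m) (l ^ 2 * a, l * b) (1, 0)) a :=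
    HasDerivAt.congr_of_eventuallyEq G hev.symm
  have K := (hasDerivAt_fst n m hq).const_mul ((l ^ (-((n : ℝ) + (m : ℕ))) : ℝ) : ℂ)
  have huniq := G'.unique K
  have hc : ((l : ℂ) ^ 2) ≠ 0 := by
    have : (l:ℂ) ≠ 0 := by exact_mod_cast hl.ne'
    exact pow_ne_zero 2 this
  have huniq' : ((l : ℂ) ^ 2) * fderiv ℝ (uu n m) (l ^ 2 * a, l * b) (1, 0)
      = ((l ^ (-((n : ℝ) + (m : ℕ))) : ℝ) : ℂ) * fderiv ℝ (uu n m) (a, b) (1, 0) := by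
    rw [← huniq, Complex.real_smul]; push_cast; ring
  have hexp : (l ^ (-((n : ℝ) + (m : ℕ)) - 2) : ℝ) = (l ^ 2)⁻¹ * l ^ (-((n : ℝ) + (m : ℕ))) := by
    rw [show -((n : ℝ) + (m : ℕ)) - 2 = (-(2:ℝ)) + -((n : ℝ) + (m : ℕ)) by ring,
      Real.rpow_add hl]
    congr 1
    rw [show (-(2:ℝ)) = -((2:ℕ):ℝ) by norm_num, Real.rpow_neg hl.le, Real.rpow_natCast]
  calc fderiv ℝ (uu n m) (l ^ 2 * a, l * b) (1, 0)
      = ((l:ℂ) ^ 2)⁻¹ * (((l:ℂ) ^ 2) * fderiv ℝ (uu n m) (l ^ 2 * a, l * b) (1, 0)) := by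
        rw [← mul_assoc, inv_mul_cancel₀ hc, one_mul]
    _ = ((l:ℂ) ^ 2)⁻¹ * (((l ^ (-((n : ℝ) + (m : ℕ))) : ℝ) : ℂ)
          * fderiv ℝ (uu n m) (a, b) (1, 0)) := by rw [huniq']
    _ = _ := by rw [hexp]; push_cast; ring

lemma bound_hom (f : ℝ × ℝ → ℂ) (hc : ContinuousOn f U) (d : ℝ)
    (hhom : ∀ a b : ℝ, (a, b) ∈ U → ∀ l : ℝ, 0 < l →
      f (l ^ 2 * a, l * b) = ((l ^ d : ℝ) : ℂ) * f (a, b)) :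
    ∃ M : ℝ, 1 ≤ M ∧ ∀ a τ : ℝ, 0 ≤ a → 0 < τ →
      ‖f (a, τ)‖ ≤ M * Real.sqrt (a + τ ^ 2) ^ d := by
  set K : Set (ℝ × ℝ) := {q | q.1 + q.2 ^ 2 = 1 ∧ 0 ≤ q.1} with hK
  have hKU : K ⊆ U := by
    intro q hq
    show 0 < q.1 + q.2 ^ 2
    rw [hq.1]; exact one_pos
  have hKc : IsCompact K := by
    have hclosed : IsClosed K := by
      apply IsClosed.inter
      · exact isClosed_eq (continuous_fst.add (continuous_snd.pow 2)) continuous_const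
      · exact isClosed_le continuous_const continuous_fst
    have hsub : K ⊆ Icc ((-1 : ℝ), (-1 : ℝ)) (1, 1) := by
      rintro ⟨a, b⟩ ⟨h1, h2⟩
      simp only [Set.mem_Icc, Prod.mk_le_mk] at *
      have hb2 : b ^ 2 ≤ 1 := by nlinarith
      have hb : -1 ≤ b ∧ b ≤ 1 := by
        constructor <;> nlinarith [sq_nonneg (b+1), sq_nonneg (b-1)]
      exact ⟨⟨by nlinarith [sq_nonneg b], hb.1⟩, by nlinarith [sq_nonneg b], hb.2⟩
    exact (isCompact_Icc).of_isClosed_subset hclosed hsub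
  obtain ⟨M₀, hM₀⟩ := hKc.exists_bound_of_continuousOn (hc.mono hKU)
  refine ⟨max M₀ 1, le_max_right _ _, ?_⟩
  intro a τ ha hτ
  have hl : 0 < Real.sqrt (a + τ ^ 2) := Real.sqrt_pos.2 (by positivity)
  set l := Real.sqrt (a + τ ^ 2) with hldef
  have hl2 : l ^ 2 = a + τ ^ 2 := Real.sq_sqrt (by positivity)
  have hq0 : (a / l ^ 2, τ / l) ∈ K := by
    constructor
    · show a / l ^ 2 + (τ / l) ^ 2 = 1
      field_simp [hl.ne']
      linarith [hl2]
    · positivity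
  have hq0U : (a / l ^ 2, τ / l) ∈ U := hKU hq0
  have := hhom (a / l ^ 2) (τ / l) hq0U l hl
  have hae : l ^ 2 * (a / l ^ 2) = a := by field_simp
  have hbe : l * (τ / l) = τ := by field_simp
  rw [hae, hbe] at this
  rw [this, norm_mul]
  have h1 : ‖((l ^ d : ℝ) : ℂ)‖ = l ^ d := by
    rw [Complex.norm_real, Real.norm_eq_abs, abs_of_pos (Real.rpow_pos_of_pos hl d)]
  rw [h1]
  have h2 : ‖f (a / l ^ 2, τ / l)‖ ≤ M₀ := hM₀ _ hq0
  have h3 : (0:ℝ) < l ^ d := Real.rpow_pos_of_pos hl d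
  calc l ^ d * ‖f (a / l ^ 2, τ / l)‖ ≤ l ^ d * M₀ := by nlinarith
    _ ≤ max M₀ 1 * l ^ d := by nlinarith [le_max_left M₀ (1:ℝ), h3]

lemma rpow_anti {x y e : ℝ} (hx : 0 < x) (hxy : x ≤ y) (he : 0 ≤ e) :
    y ^ (-e) ≤ x ^ (-e) := by
  rw [Real.rpow_neg (hx.trans_le hxy).le, Real.rpow_neg hx.le]
  exact inv_anti₀ (Real.rpow_pos_of_pos hx e)
    (Real.rpow_le_rpow hx.le hxy he)

lemma key_cont {γ N R : ℝ} (hR : 0 < R) :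
    ContinuousOn (fun s : ℝ => s ^ (γ - 1) * (R + s) ^ (-N)) (Ioi 0) := by
  intro s hs
  have hs' : (0:ℝ) < s := hs
  apply ContinuousWithinAt.mul
  · exact (Real.continuousAt_rpow_const s _ (Or.inl hs'.ne')).continuousWithinAt
  · exact ((Real.continuousAt_rpow_const (R + s) _ (Or.inl (by positivity))).comp
      (by fun_prop)).continuousWithinAt

lemma key_int {γ N R : ℝ} (hγ : 0 < γ) (hN : γ < N) (hR : 0 < R) :
    IntegrableOn (fun s : ℝ => s ^ (γ - 1) * (R + s) ^ (-N)) (Ioi 0) ∧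
    ∫ s in Ioi (0:ℝ), s ^ (γ - 1) * (R + s) ^ (-N)
      ≤ (1 / γ + 1 / (N - γ)) * R ^ (γ - N) := by
  set g : ℝ → ℝ := fun s => s ^ (γ - 1) * (R + s) ^ (-N) with hg
  have hNpos : 0 < N := hγ.trans hN
  have hsplit : Ioi (0:ℝ) = Ioc 0 R ∪ Ioi R := (Ioc_union_Ioi_eq_Ioi hR.le).symm
  have hmeas1 : AEStronglyMeasurable g (volume.restrict (Ioc 0 R)) :=
    ((key_cont (γ := γ) (N := N) hR).mono Ioc_subset_Ioi_self).aestronglyMeasurable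
      measurableSet_Ioc
  have hg1 : ∀ s ∈ Ioc (0:ℝ) R, g s ≤ R ^ (-N) * s ^ (γ - 1) := by
    intro s hs
    have hs0 : (0:ℝ) < s := hs.1
    have h1 : (R + s) ^ (-N) ≤ R ^ (-N) :=
      rpow_anti hR (by linarith) hNpos.le
    have h2 : (0:ℝ) ≤ s ^ (γ - 1) := (Real.rpow_pos_of_pos hs0 _).le
    calc g s = s ^ (γ - 1) * (R + s) ^ (-N) := rfl
      _ ≤ s ^ (γ - 1) * R ^ (-N) := by nlinarith [Real.rpow_pos_of_pos hs0 (γ-1)]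
      _ = R ^ (-N) * s ^ (γ - 1) := by ring
  have hg0 : ∀ s ∈ Ioi (0:ℝ), 0 ≤ g s := by
    intro s hs
    have hs0 : (0:ℝ) < s := hs
    have : (0:ℝ) < R + s := by linarith
    positivity
  have hint1' : IntegrableOn (fun s : ℝ => R ^ (-N) * s ^ (γ - 1)) (Ioc 0 R) := by
    apply Integrable.const_mul
    have := (intervalIntegral.intervalIntegrable_rpow' (a := 0) (b := R) (r := γ - 1)
      (by linarith))
    rwa [intervalIntegrable_iff_integrableOn_Ioc_of_le hR.le] at this
  have hint1 : IntegrableOn g (Ioc 0 R) := by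
    apply Integrable.mono' hint1' hmeas1
    filter_upwards [ae_restrict_mem measurableSet_Ioc] with s hs
    rw [Real.norm_eq_abs, abs_of_nonneg (hg0 s (Ioc_subset_Ioi_self hs))]
    exact hg1 s hs
  have hmeas2 : AEStronglyMeasurable g (volume.restrict (Ioi R)) :=
    ((key_cont (γ := γ) (N := N) hR).mono (Ioi_subset_Ioi hR.le)).aestronglyMeasurable
      measurableSet_Ioi
  have hg2 : ∀ s ∈ Ioi R, g s ≤ s ^ (γ - 1 - N) := by
    intro s hs
    have hs0 : (0:ℝ) < s := hR.trans hs
    have h1 : (R + s) ^ (-N) ≤ s ^ (-N) := rpow_anti hs0 (by linarith) hNpos.le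
    have h2 : (0:ℝ) < s ^ (γ - 1) := Real.rpow_pos_of_pos hs0 _
    calc g s ≤ s ^ (γ - 1) * s ^ (-N) := mul_le_mul_of_nonneg_left h1 h2.le
      _ = s ^ (γ - 1 - N) := by
          rw [← Real.rpow_add hs0]; ring_nf
  have hint2' : IntegrableOn (fun s : ℝ => s ^ (γ - 1 - N)) (Ioi R) :=
    integrableOn_Ioi_rpow_of_lt (by linarith) hR
  have hint2 : IntegrableOn g (Ioi R) := by
    apply Integrable.mono' hint2' hmeas2
    filter_upwards [ae_restrict_mem measurableSet_Ioi] with s hs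
    rw [Real.norm_eq_abs, abs_of_nonneg (hg0 s (Ioi_subset_Ioi hR.le hs))]
    exact hg2 s hs
  have hint : IntegrableOn g (Ioi 0) := by
    rw [hsplit]; exact hint1.union hint2
  refine ⟨hint, ?_⟩
  have hI1 : ∫ s in Ioc (0:ℝ) R, g s ≤ R ^ (γ - N) / γ := by
    have hle : ∫ s in Ioc (0:ℝ) R, g s ≤ ∫ s in Ioc (0:ℝ) R, R ^ (-N) * s ^ (γ - 1) :=
      setIntegral_mono_on hint1 hint1' measurableSet_Ioc hg1
    have heval : ∫ s in Ioc (0:ℝ) R, R ^ (-N) * s ^ (γ - 1) = R ^ (-N) * (R ^ γ / γ) := by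
      rw [MeasureTheory.integral_const_mul]
      congr 1
      rw [← intervalIntegral.integral_of_le hR.le]
      rw [integral_rpow (Or.inl (by linarith))]
      rw [sub_add_cancel, Real.zero_rpow hγ.ne']
      ring
    rw [heval] at hle
    calc ∫ s in Ioc (0:ℝ) R, g s ≤ R ^ (-N) * (R ^ γ / γ) := hle
      _ = R ^ (γ - N) / γ := by
          rw [show γ - N = -N + γ by ring, Real.rpow_add hR]; ring
  have hI2 : ∫ s in Ioi R, g s ≤ R ^ (γ - N) / (N - γ) := by
    have hle : ∫ s in Ioi R, g s ≤ ∫ s in Ioi R, s ^ (γ - 1 - N) :=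
      setIntegral_mono_on hint2 hint2' measurableSet_Ioi hg2
    have heval : ∫ s in Ioi R, s ^ (γ - 1 - N) = R ^ (γ - N) / (N - γ) := by
      rw [integral_Ioi_rpow_of_lt (by linarith) hR]
      rw [show γ - 1 - N + 1 = γ - N by ring]
      rw [div_eq_div_iff (by linarith) (by linarith)]
      ring
    linarith [heval ▸ hle]
  have hunion : ∫ s in Ioi (0:ℝ), g s = (∫ s in Ioc (0:ℝ) R, g s) + ∫ s in Ioi R, g s := by
    rw [hsplit]
    exact setIntegral_union (Ioc_disjoint_Ioi le_rfl) measurableSet_Ioi hint1 hint2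
  rw [hunion]
  have : (1 / γ + 1 / (N - γ)) * R ^ (γ - N)
      = R ^ (γ - N) / γ + R ^ (γ - N) / (N - γ) := by ring
  rw [this]
  exact add_le_add hI1 hI2

lemma pk_eq (n : ℕ) (x : EuclideanSpace ℝ (Fin n)) (τ : ℝ) :
    classicalPoissonKernel n τ x = FkR n (‖x‖ ^ 2, τ) := by
  unfold classicalPoissonKernel FkR cc pp
  rw [Real.rpow_neg (by positivity)]
  ring

end S2

set_option maxHeartbeats 2000000 in
/-- `|∇_z k(y,z,t)| ≤ C t^β / (t + |y−z|)^{n+β+1}`. -/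
theorem statement2 (n : ℕ) (hn : 1 ≤ n) (β : ℝ) (hβ : 0 < β) :
    ∃ C > (0 : ℝ), ∀ (y z : EuclideanSpace ℝ (Fin n)) (t : ℝ), 0 < t →
      ‖fderiv ℝ (fun w => kker n β y w t) z‖
        ≤ C * t ^ β / (t + ‖y - z‖) ^ ((n : ℝ) + β + 1) := by
  classical
  obtain ⟨m, hm⟩ : ∃ m : ℕ, m = fracOrder β := ⟨_, rfl⟩
  have hfln : (0:ℤ) ≤ ⌊β⌋ := Int.floor_nonneg.mpr hβ.le
  have hcast : ((⌊β⌋.toNat : ℕ) : ℝ) = ((⌊β⌋ : ℤ) : ℝ) := by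
    rw [← Int.cast_natCast, Int.toNat_of_nonneg hfln]
  have hmβlt : β < (m : ℝ) := by
    rw [hm]; unfold fracOrder
    push_cast
    rw [hcast]
    exact Int.lt_floor_add_one β
  have hmβle : (m : ℝ) - 1 ≤ β := by
    rw [hm]; unfold fracOrder
    push_cast
    rw [hcast]
    linarith [Int.floor_le β]
  have hγpos : 0 < (m:ℝ) - β := by linarith
  have hγ1 : (m:ℝ) - β ≤ 1 := by linarith
  have hn1 : (1:ℝ) ≤ (n:ℝ) := by exact_mod_cast hn
  have hm0 : (0:ℝ) ≤ (m:ℝ) := Nat.cast_nonneg m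
  set γ : ℝ := (m:ℝ) - β with hγdef
  set N : ℝ := (n:ℝ) + (m:ℝ) + 1 with hNdef
  have hγN : γ < N := by rw [hγdef, hNdef]; linarith
  have hγNm : γ < (n:ℝ) + (m:ℝ) := by rw [hγdef]; linarith
  obtain ⟨Mu, hMu1, hMu⟩ := S2.bound_hom (S2.uu n m) ((S2.smooth_uu n m).continuousOn)
      (-((n:ℝ) + (m:ℕ))) (fun a b hq l hl => S2.hom_uu n m a b hq l hl)
  have hvcont : ContinuousOn (fun q => fderiv ℝ (S2.uu n m) q ((1:ℝ),(0:ℝ))) S2.U :=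
    (((S2.smooth_uu n m).fderiv_of_isOpen (m := (⊤ : ℕ∞)) S2.hU (mod_cast le_top)).clm_apply contDiffOn_const).continuousOn
  obtain ⟨Mv, hMv1, hMv⟩ := S2.bound_hom (fun q => fderiv ℝ (S2.uu n m) q ((1:ℝ),(0:ℝ))) hvcont
      (-((n:ℝ) + (m:ℕ)) - 2) (fun a b hq l hl => S2.hom_vv n m hq hl)
  set c₂ : ℂ := Complex.exp (-(Complex.I * (Real.pi : ℂ) * ((m : ℂ) - (β : ℂ)))) /
      Complex.Gamma ((m : ℂ) - (β : ℂ)) with hc₂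
  set Cb : ℝ := 2 * Mv * 4 ^ N with hCb
  have hMvpos : (0:ℝ) < Mv := lt_of_lt_of_le one_pos hMv1
  have hMupos : (0:ℝ) < Mu := lt_of_lt_of_le one_pos hMu1
  have h4N : (0:ℝ) < 4 ^ N := Real.rpow_pos_of_pos (by norm_num) N
  have hCbpos : 0 < Cb := by rw [hCb]; positivity
  set Ct : ℝ := 1/γ + 1/(N - γ) with hCt
  have hCtpos : 0 < Ct := by
    rw [hCt]
    have h1 : (0:ℝ) < 1/γ := by positivity
    have h2 : (0:ℝ) < 1/(N-γ) := by
      apply one_div_pos.mpr; linarith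
    linarith
  have hCge : (0:ℝ) ≤ ‖c₂‖ * Cb * Ct :=
    mul_nonneg (mul_nonneg (norm_nonneg _) hCbpos.le) hCtpos.le
  refine ⟨‖c₂‖ * Cb * Ct + 1, by linarith, ?_⟩
  intro y z t ht
  set R : ℝ := t + ‖y - z‖ with hRdef
  have hRpos : 0 < R := by rw [hRdef]; positivity
  set Φ : EuclideanSpace ℝ (Fin n) → ℝ → ℂ :=
    fun w s => S2.uu n m (‖y - w‖ ^ 2, t + s) * ((s ^ (γ - 1) : ℝ) : ℂ) with hΦ
  set Qd : EuclideanSpace ℝ (Fin n) → (EuclideanSpace ℝ (Fin n) →L[ℝ] ℝ) :=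
    fun w => 2 • (innerSL ℝ (y - w)).comp
      (-(ContinuousLinearMap.id ℝ (EuclideanSpace ℝ (Fin n)))) with hQd
  set F' : EuclideanSpace ℝ (Fin n) → ℝ → (EuclideanSpace ℝ (Fin n) →L[ℝ] ℂ) :=
    fun w s => ((s ^ (γ - 1) : ℝ) : ℂ) •
      ((fderiv ℝ (S2.uu n m) (‖y - w‖ ^ 2, t + s)).comp
        ((Qd w).prod (0 : EuclideanSpace ℝ (Fin n) →L[ℝ] ℝ))) with hF'
  have hUmem : ∀ (w : EuclideanSpace ℝ (Fin n)) (s : ℝ), 0 < s →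
      ((‖y - w‖ ^ 2 : ℝ), t + s) ∈ S2.U := by
    intro w s hs
    show (0:ℝ) < ‖y - w‖ ^ 2 + (t + s) ^ 2
    have hts : 0 < t + s := by linarith
    positivity
  -- pointwise differentiability
  have hdiffΦ : ∀ s : ℝ, 0 < s → ∀ w, HasFDerivAt (fun w' => Φ w' s) (F' w s) w := by
    intro s hs w
    have hq := hUmem w s hs
    have h1 : HasFDerivAt (fun w' : EuclideanSpace ℝ (Fin n) => ‖y - w'‖ ^ 2) (Qd w) w := by
      simp only [hQd]
      exact ((hasFDerivAt_id w).const_sub y).norm_sq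
    have h2 := h1.prodMk (hasFDerivAt_const (t + s) w)
    have h3 := (S2.diff_uu n m hq).hasFDerivAt
    have h4 := h3.comp w h2
    have h5 := h4.const_mul ((s ^ (γ - 1) : ℝ) : ℂ)
    refine HasFDerivAt.congr_of_eventuallyEq ?_
      (Filter.Eventually.of_forall (fun w' => mul_comm _ _))
    exact h5
  -- norm bound on the ball
  have hbound : ∀ s : ℝ, 0 < s → ∀ w ∈ Metric.ball z (t/2),
      ‖F' w s‖ ≤ Cb * (s ^ (γ - 1) * (R + s) ^ (-N)) := by
    intro s hs w hw
    have hts : (0:ℝ) < t + s := by linarith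
    set aw : ℝ := ‖y - w‖ ^ 2 with haw
    have hawnn : (0:ℝ) ≤ aw := by rw [haw]; positivity
    have hq := hUmem w s hs
    have hsγ : (0:ℝ) < s ^ (γ - 1) := Real.rpow_pos_of_pos hs _
    have hvb := hMv aw (t + s) hawnn hts
    set T : EuclideanSpace ℝ (Fin n) →L[ℝ] ℂ := (fderiv ℝ (S2.uu n m) (aw, t + s)).comp
      ((Qd w).prod (0 : EuclideanSpace ℝ (Fin n) →L[ℝ] ℝ)) with hT
    set l := Real.sqrt (aw + (t + s) ^ 2) with hldef
    have hlpos : 0 < l := Real.sqrt_pos.2 (by positivity)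
    have hwl : ‖y - w‖ ≤ l := by
      rw [hldef]
      calc ‖y - w‖ = Real.sqrt (‖y - w‖ ^ 2) := (Real.sqrt_sq (norm_nonneg _)).symm
        _ ≤ _ := Real.sqrt_le_sqrt (by rw [haw] at *; nlinarith [sq_nonneg (t + s)])
    have htsl : t + s ≤ l := by
      rw [hldef]
      calc t + s = Real.sqrt ((t + s) ^ 2) := (Real.sqrt_sq hts.le).symm
        _ ≤ _ := Real.sqrt_le_sqrt (by nlinarith [hawnn])
    have hV : (0:ℝ) ≤ ‖fderiv ℝ (S2.uu n m) (aw, t + s) ((1:ℝ),(0:ℝ))‖ :=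
      norm_nonneg _
    have hop : ‖T‖ ≤ 2 * ‖y - w‖ * ‖fderiv ℝ (S2.uu n m) (aw, t + s) ((1:ℝ),(0:ℝ))‖ := by
      apply ContinuousLinearMap.opNorm_le_bound _ (by positivity)
      intro h
      rw [hT, ContinuousLinearMap.comp_apply]
      have happ : ((Qd w).prod (0 : EuclideanSpace ℝ (Fin n) →L[ℝ] ℝ)) h
          = ((Qd w h : ℝ), (0:ℝ)) := rfl
      rw [happ]
      have hsm : ((Qd w h : ℝ), (0:ℝ)) = (Qd w h) • (((1:ℝ), (0:ℝ)) : ℝ × ℝ) := by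
        simp [Prod.smul_mk]
      rw [hsm, (fderiv ℝ (S2.uu n m) (aw, t + s)).map_smul]
      rw [norm_smul (Qd w h) (fderiv ℝ (S2.uu n m) (aw, t + s) ((1:ℝ),(0:ℝ))),
        Real.norm_eq_abs]
      have hQdb : |Qd w h| ≤ 2 * ‖y - w‖ * ‖h‖ := by
        simp only [hQd]
        simp only [ContinuousLinearMap.smul_apply, ContinuousLinearMap.comp_apply,
          ContinuousLinearMap.neg_apply, ContinuousLinearMap.id_apply, innerSL_apply_apply]
        rw [two_smul]
        have h1 := abs_real_inner_le_norm (y - w) (-h)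
        have h2 := abs_add_le (inner ℝ (y - w) (-h) : ℝ) (inner ℝ (y - w) (-h) : ℝ)
        rw [norm_neg] at h1
        nlinarith [abs_nonneg (inner ℝ (y - w) (-h) : ℝ)]
      calc |Qd w h| * ‖fderiv ℝ (S2.uu n m) (aw, t + s) ((1:ℝ),(0:ℝ))‖
          ≤ (2 * ‖y - w‖ * ‖h‖) * ‖fderiv ℝ (S2.uu n m) (aw, t + s) ((1:ℝ),(0:ℝ))‖ :=
            mul_le_mul_of_nonneg_right hQdb hV
        _ = 2 * ‖y - w‖ * ‖fderiv ℝ (S2.uu n m) (aw, t + s) ((1:ℝ),(0:ℝ))‖ * ‖h‖ := by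
            ring
    have hF'n : ‖F' w s‖ = s ^ (γ - 1) * ‖T‖ := by
      simp only [hF']
      rw [← haw, ← hT]
      rw [norm_smul (((s ^ (γ - 1) : ℝ) : ℂ)) T]
      rw [Complex.norm_real, Real.norm_eq_abs, abs_of_pos hsγ]
    rw [hF'n]
    have hldecomp : l ^ (-((n:ℝ) + (m:ℕ)) - 2) = l ^ (-N) * l⁻¹ := by
      rw [show -((n:ℝ) + (m:ℕ)) - 2 = (-N) + (-1) by rw [hNdef]; push_cast; ring,
        Real.rpow_add hlpos, Real.rpow_neg_one]
    have hvb' : ‖fderiv ℝ (S2.uu n m) (aw, t + s) ((1:ℝ),(0:ℝ))‖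
        ≤ Mv * (l ^ (-N) * l⁻¹) := by
      rw [← hldecomp]; exact hvb
    have hinv : ‖y - w‖ * l⁻¹ ≤ 1 := by
      rw [← div_eq_mul_inv]; exact div_le_one_of_le₀ hwl hlpos.le
    have hzw : ‖y - z‖ ≤ ‖y - w‖ + t/2 := by
      have h1 : ‖y - z‖ ≤ ‖y - w‖ + ‖w - z‖ := by
        calc ‖y - z‖ = ‖(y - w) + (w - z)‖ := by abel_nf
          _ ≤ _ := norm_add_le _ _
      have h2 : ‖w - z‖ < t/2 := by
        rw [← dist_eq_norm]; exact Metric.mem_ball.mp hw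
      linarith
    have hlR : (R + s)/4 ≤ l := by
      rw [hRdef]
      linarith
    have hRspos : (0:ℝ) < R + s := by
      have : (0:ℝ) < R := hRpos
      linarith
    have hNnonneg : (0:ℝ) ≤ N := by rw [hNdef]; positivity
    have hlN : l ^ (-N) ≤ 4 ^ N * (R + s) ^ (-N) := by
      have h1 := S2.rpow_anti (x := (R + s)/4) (by positivity) hlR hNnonneg
      have h2 : ((R + s)/4 : ℝ) ^ (-N) = 4 ^ N * (R + s) ^ (-N) := by
        rw [Real.div_rpow hRspos.le (by norm_num : (0:ℝ) ≤ 4),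
          Real.rpow_neg hRspos.le, Real.rpow_neg (by norm_num : (0:ℝ) ≤ 4)]
        rw [div_inv_eq_mul]
        ring
      rw [h2] at h1
      exact h1
    have hLpos : (0:ℝ) < l ^ (-N) := Real.rpow_pos_of_pos hlpos _
    calc s ^ (γ - 1) * ‖T‖
        ≤ s ^ (γ - 1) * (2 * ‖y - w‖
            * ‖fderiv ℝ (S2.uu n m) (aw, t + s) ((1:ℝ),(0:ℝ))‖) :=
          mul_le_mul_of_nonneg_left hop hsγ.le
      _ ≤ s ^ (γ - 1) * (2 * ‖y - w‖ * (Mv * (l ^ (-N) * l⁻¹))) := by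
          refine mul_le_mul_of_nonneg_left ?_ hsγ.le
          exact mul_le_mul_of_nonneg_left hvb' (by positivity)
      _ ≤ s ^ (γ - 1) * (2 * Mv * l ^ (-N)) := by
          refine mul_le_mul_of_nonneg_left ?_ hsγ.le
          calc 2 * ‖y - w‖ * (Mv * (l ^ (-N) * l⁻¹))
              = 2 * (Mv * l ^ (-N)) * (‖y - w‖ * l⁻¹) := by ring
            _ ≤ 2 * (Mv * l ^ (-N)) * 1 := by
                refine mul_le_mul_of_nonneg_left hinv (by positivity)
            _ = 2 * Mv * l ^ (-N) := by ring
      _ ≤ s ^ (γ - 1) * (2 * Mv * (4 ^ N * (R + s) ^ (-N))) := by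
          refine mul_le_mul_of_nonneg_left ?_ hsγ.le
          exact mul_le_mul_of_nonneg_left hlN (by positivity)
      _ = Cb * (s ^ (γ - 1) * (R + s) ^ (-N)) := by rw [hCb]; ring
  -- measurability of Φ
  have hcontrpow : ContinuousOn (fun s : ℝ => ((s ^ (γ-1) : ℝ) : ℂ)) (Ioi 0) :=
    Complex.continuous_ofReal.comp_continuousOn
      (fun s hs => (Real.continuousAt_rpow_const s _
        (Or.inl (ne_of_gt hs))).continuousWithinAt)
  have hcontuu : ∀ (w : EuclideanSpace ℝ (Fin n)),
      ContinuousOn (fun s : ℝ => S2.uu n m (‖y - w‖ ^ 2, t + s)) (Ioi 0) := by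
    intro w
    exact (S2.smooth_uu n m).continuousOn.comp
      ((continuous_const.prodMk (continuous_const.add continuous_id)).continuousOn)
      (fun s hs => hUmem w s hs)
  have hmeasΦ : ∀ (w : EuclideanSpace ℝ (Fin n)),
      AEStronglyMeasurable (Φ w) (volume.restrict (Ioi 0)) := by
    intro w
    exact ((hcontuu w).mul hcontrpow).aestronglyMeasurable measurableSet_Ioi
  -- integrability of Φ w
  have hintΦ : ∀ (w : EuclideanSpace ℝ (Fin n)),
      Integrable (Φ w) (volume.restrict (Ioi 0)) := by
    intro w
    have hkey := S2.key_int (γ := γ) (N := (n:ℝ) + (m:ℝ)) (R := t) hγpos hγNm ht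
    apply Integrable.mono' (hkey.1.const_mul Mu) (hmeasΦ w)
    filter_upwards [ae_restrict_mem measurableSet_Ioi] with s hs
    have hs' : (0:ℝ) < s := hs
    have hts : (0:ℝ) < t + s := by linarith
    have hub := hMu (‖y - w‖ ^ 2) (t + s) (sq_nonneg _) hts
    have hlpos : (0:ℝ) < Real.sqrt (‖y - w‖ ^ 2 + (t + s) ^ 2) :=
      Real.sqrt_pos.2 (by positivity)
    have htsl : t + s ≤ Real.sqrt (‖y - w‖ ^ 2 + (t + s) ^ 2) := by
      calc t + s = Real.sqrt ((t + s) ^ 2) := (Real.sqrt_sq hts.le).symm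
        _ ≤ _ := Real.sqrt_le_sqrt (by nlinarith [sq_nonneg ‖y - w‖])
    have hmono : Real.sqrt (‖y - w‖ ^ 2 + (t + s) ^ 2) ^ (-((n:ℝ) + (m:ℕ)))
        ≤ (t + s) ^ (-((n:ℝ) + (m:ℕ))) := S2.rpow_anti hts htsl (by positivity)
    have hΦn : ‖Φ w s‖ = ‖S2.uu n m (‖y - w‖ ^ 2, t + s)‖ * s ^ (γ - 1) := by
      simp only [hΦ]
      rw [norm_mul, Complex.norm_real, Real.norm_eq_abs,
        abs_of_pos (Real.rpow_pos_of_pos hs' _)]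
    rw [hΦn]
    have hsg : (0:ℝ) < s ^ (γ - 1) := Real.rpow_pos_of_pos hs' _
    calc ‖S2.uu n m (‖y - w‖ ^ 2, t + s)‖ * s ^ (γ - 1)
        ≤ (Mu * Real.sqrt (‖y - w‖ ^ 2 + (t + s) ^ 2) ^ (-((n:ℝ) + (m:ℕ)))) * s ^ (γ - 1) :=
          mul_le_mul_of_nonneg_right hub hsg.le
      _ ≤ (Mu * (t + s) ^ (-((n:ℝ) + (m:ℕ)))) * s ^ (γ - 1) := by
          have := mul_le_mul_of_nonneg_right
            (mul_le_mul_of_nonneg_left hmono hMupos.le) hsg.le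
          linarith
      _ = Mu * (s ^ (γ - 1) * (t + s) ^ (-((n:ℝ) + (m:ℝ)))) := by ring
  -- measurability of F' z
  have hF'meas : AEStronglyMeasurable (F' z) (volume.restrict (Ioi 0)) := by
    have hfdc : ContinuousOn (fun q : ℝ × ℝ => fderiv ℝ (S2.uu n m) q) S2.U :=
      ((S2.smooth_uu n m).fderiv_of_isOpen (m := (⊤ : ℕ∞)) S2.hU (mod_cast le_top)).continuousOn
    have h1 : ContinuousOn (fun s : ℝ => fderiv ℝ (S2.uu n m) (‖y - z‖ ^ 2, t + s)) (Ioi 0) :=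
      hfdc.comp ((continuous_const.prodMk (continuous_const.add continuous_id)).continuousOn)
        (fun s hs => hUmem z s hs)
    have h2 : ContinuousOn (fun s : ℝ => (fderiv ℝ (S2.uu n m) (‖y - z‖ ^ 2, t + s)).comp
        ((Qd z).prod (0 : EuclideanSpace ℝ (Fin n) →L[ℝ] ℝ))) (Ioi 0) :=
      h1.clm_comp continuousOn_const
    exact (hcontrpow.smul h2).aestronglyMeasurable measurableSet_Ioi
  have hbound_int : Integrable (fun s : ℝ => Cb * (s ^ (γ-1) * (R+s) ^ (-N)))
      (volume.restrict (Ioi 0)) := (S2.key_int hγpos hγN hRpos).1.const_mul Cb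
  -- differentiate under the integral
  have HD := hasFDerivAt_integral_of_dominated_of_fderiv_le (F := Φ) (F' := F') (x₀ := z)
    (bound := fun s => Cb * (s ^ (γ-1) * (R+s) ^ (-N)))
    (Metric.ball_mem_nhds z (half_pos ht)) (Filter.Eventually.of_forall hmeasΦ) (hintΦ z) hF'meas
    (by
      filter_upwards [ae_restrict_mem measurableSet_Ioi] with s hs
      exact hbound s hs)
    hbound_int
    (by
      filter_upwards [ae_restrict_mem measurableSet_Ioi] with s hs
      exact fun w _ => hdiffΦ s hs w)
  have hkk : (fun w => kker n β y w t)
      = fun w => (((t ^ β : ℝ) : ℂ) * c₂) * ∫ s in Ioi (0:ℝ), Φ w s := by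
    funext w
    unfold kker fracDeriv
    rw [← hm, ← hc₂, ← mul_assoc]
    congr 1
    refine MeasureTheory.setIntegral_congr_fun measurableSet_Ioi (fun s hs => ?_)
    have hs' : (0:ℝ) < s := hs
    have hfun : (fun τ => ((classicalPoissonKernel n τ (y - w) : ℝ) : ℂ))
        = fun τ => ((S2.FkR n (‖y - w‖ ^ 2, τ) : ℝ) : ℂ) := by
      funext τ; rw [S2.pk_eq]
    show iteratedDeriv m (fun τ => ((classicalPoissonKernel n τ (y - w) : ℝ) : ℂ)) (t + s)
        * ((s ^ ((m:ℝ) - β - 1) : ℝ) : ℂ) = Φ w s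
    rw [hfun, S2.link n m _ _ (hUmem w s hs'), hΦ]
  have HK : HasFDerivAt (fun w => kker n β y w t)
      ((((t ^ β : ℝ) : ℂ) * c₂) • ∫ s in Ioi (0:ℝ), F' z s) z := by
    rw [hkk]
    exact HD.const_mul _
  rw [HK.fderiv]
  have hIF'bound : ∀ᵐ s ∂(volume.restrict (Ioi (0:ℝ))),
      ‖F' z s‖ ≤ Cb * (s ^ (γ-1) * (R+s) ^ (-N)) := by
    filter_upwards [ae_restrict_mem measurableSet_Ioi] with s hs
    exact hbound s hs z (Metric.mem_ball_self (half_pos ht))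
  have h6 : ‖∫ s in Ioi (0:ℝ), F' z s‖ ≤ ∫ s in Ioi (0:ℝ), Cb * (s ^ (γ-1) * (R+s) ^ (-N)) := by
    refine (norm_integral_le_integral_norm _).trans ?_
    exact integral_mono_of_nonneg (Filter.Eventually.of_forall (fun s => norm_nonneg _))
      hbound_int hIF'bound
  have h7 : ∫ s in Ioi (0:ℝ), Cb * (s ^ (γ-1) * (R+s) ^ (-N)) ≤ Cb * (Ct * R ^ (γ - N)) := by
    rw [MeasureTheory.integral_const_mul]
    have hki := (S2.key_int hγpos hγN hRpos).2
    calc Cb * ∫ s in Ioi (0:ℝ), s ^ (γ-1) * (R+s) ^ (-N)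
        ≤ Cb * ((1/γ + 1/(N-γ)) * R ^ (γ - N)) := mul_le_mul_of_nonneg_left hki hCbpos.le
      _ = Cb * (Ct * R ^ (γ - N)) := by rw [hCt]
  rw [norm_smul (((t ^ β : ℝ) : ℂ) * c₂) (∫ s in Ioi (0:ℝ), F' z s)]
  have hnormc : ‖(((t ^ β : ℝ) : ℂ) * c₂)‖ = t ^ β * ‖c₂‖ := by
    rw [norm_mul, Complex.norm_real, Real.norm_eq_abs,
      abs_of_pos (Real.rpow_pos_of_pos ht β)]
  rw [hnormc]
  have hexp : R ^ (γ - N) = (R ^ ((n:ℝ) + β + 1))⁻¹ := by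
    rw [show γ - N = -((n:ℝ) + β + 1) by rw [hγdef, hNdef]; ring,
      Real.rpow_neg hRpos.le]
  have hden : (0:ℝ) < R ^ ((n:ℝ) + β + 1) := Real.rpow_pos_of_pos hRpos _
  have htb : (0:ℝ) < t ^ β := Real.rpow_pos_of_pos ht β
  have hI : ‖∫ s in Ioi (0:ℝ), F' z s‖ ≤ Cb * Ct * (R ^ ((n:ℝ) + β + 1))⁻¹ := by
    rw [hexp] at h7
    calc ‖∫ s in Ioi (0:ℝ), F' z s‖ ≤ Cb * (Ct * (R ^ ((n:ℝ) + β + 1))⁻¹) := h6.trans h7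
      _ = Cb * Ct * (R ^ ((n:ℝ) + β + 1))⁻¹ := by ring
  have hXpos : (0:ℝ) < (R ^ ((n:ℝ) + β + 1))⁻¹ := inv_pos.mpr hden
  calc t ^ β * ‖c₂‖ * ‖∫ s in Ioi (0:ℝ), F' z s‖
      ≤ t ^ β * ‖c₂‖ * (Cb * Ct * (R ^ ((n:ℝ) + β + 1))⁻¹) := by
        apply mul_le_mul_of_nonneg_left hI (by positivity)
    _ ≤ (‖c₂‖ * Cb * Ct + 1) * t ^ β / R ^ ((n:ℝ) + β + 1) := by
        rw [div_eq_mul_inv]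
        nlinarith [mul_pos htb hXpos, hCge]
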